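/- Let E be a finite set with positive, pairwise distinct weights w : E → ℝ, let p > 0 be a dominant power, and let F be a downward-closed family of subsets of E with ∅ ∈ F. Consider the greedy algorithm that processes the elements of E in strictly descending order of weight, maintaining an active set A initialized to ∅, and adds element e to A whenever A ∪ {e} ∈ F. Then the set A returned by this algorithm maximizes ∑_{e ∈ A} w_e^p over all A ∈ F (abstract form of the Optimality of the Semantic Mutex Watershed lemma). -/

import Mathlib

/-!
Compare the greedy output `A` with any `B ∈ F` at the heaviest element `e` on which they
differ. If `e ∈ B \ A`, then when `e` was processed the active set consisted of elements of `A`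
heavier than `e`, which all lie in `B`; by downward closure adding `e` was allowed, so greedy
would have taken it. Hence `e ∈ A \ B`: above `e` the two sets agree, and by dominance `w e ^ p`
outweighs all of `B` below `e`.
-/

/-- `p` is a dominant power for the weights `w` if for every edge `e`,
`w e ^ p` strictly exceeds the sum of `w s ^ p` over all `s` with `w s < w e`. -/
def DominantPower {E : Type*} [Fintype E] (w : E → ℝ) (p : ℝ) : Prop :=
  ∀ e : E, (∑ s ∈ Finset.univ.filter (fun s => w s < w e), w s ^ p) < w e ^ p

open Classical in
/-- One step of the greedy algorithm: add the element `e` to the active set `A`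
exactly when the enlarged set is still in the family `F`. -/
noncomputable def greedyStep {E : Type*} [DecidableEq E] (F : Set (Finset E))
    (A : Finset E) (e : E) : Finset E :=
  if insert e A ∈ F then insert e A else A

/-- The greedy algorithm: process the elements in the order given by the list
`l`, starting from the empty active set. -/
noncomputable def greedy {E : Type*} [DecidableEq E] (F : Set (Finset E))
    (l : List E) : Finset E :=
  l.foldl (greedyStep F) ∅

section Greedy

variable {E : Type*} [DecidableEq E] (F : Set (Finset E))

lemma subset_greedyStep (A : Finset E) (e : E) : A ⊆ greedyStep F A e := by
  unfold greedyStep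
  split
  · exact Finset.subset_insert _ _
  · exact subset_rfl

lemma greedyStep_subset_insert (A : Finset E) (e : E) : greedyStep F A e ⊆ insert e A := by
  unfold greedyStep
  split
  · exact subset_rfl
  · exact Finset.subset_insert _ _

lemma greedyStep_mem {A : Finset E} (hA : A ∈ F) (e : E) : greedyStep F A e ∈ F := by
  unfold greedyStep
  split <;> assumption

lemma greedyStep_of_insert_mem {A : Finset E} {e : E} (h : insert e A ∈ F) :
    greedyStep F A e = insert e A :=
  if_pos h

lemma subset_foldl_greedyStep (l : List E) (A : Finset E) : A ⊆ l.foldl (greedyStep F) A := by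
  induction l generalizing A with
  | nil => exact subset_rfl
  | cons e l ih => exact (subset_greedyStep F A e).trans (ih _)

lemma foldl_greedyStep_mem (l : List E) {A : Finset E} (hA : A ∈ F) :
    l.foldl (greedyStep F) A ∈ F := by
  induction l generalizing A with
  | nil => exact hA
  | cons e l ih => exact ih (greedyStep_mem F hA e)

lemma foldl_greedyStep_subset (l : List E) (A : Finset E) :
    l.foldl (greedyStep F) A ⊆ A ∪ l.toFinset := by
  induction l generalizing A with
  | nil => simp
  | cons e l ih =>
    refine (ih _).trans (Finset.union_subset ?_ ?_)
    · refine (greedyStep_subset_insert F A e).trans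
        (Finset.insert_subset (by simp) Finset.subset_union_left)
    · rw [List.toFinset_cons]
      exact (Finset.subset_insert e _).trans Finset.subset_union_right

lemma greedy_mem (hempty : ∅ ∈ F) (l : List E) : greedy F l ∈ F :=
  foldl_greedyStep_mem F l hempty

lemma greedy_subset_toFinset (l : List E) : greedy F l ⊆ l.toFinset := by
  simpa [greedy] using foldl_greedyStep_subset F l ∅

lemma greedy_append_cons (l₁ l₂ : List E) (e : E) :
    greedy F (l₁ ++ e :: l₂) = l₂.foldl (greedyStep F) (greedyStep F (greedy F l₁) e) := by
  rw [greedy, List.foldl_append, List.foldl_cons, greedy]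

theorem mem_greedy_of_insert_mem (hdown : ∀ A B : Finset E, A ⊆ B → B ∈ F → A ∈ F)
    {r : E → E → Prop} [DecidableRel r] {l : List E} (hsorted : l.Pairwise r) {e : E}
    (he : e ∈ l) (hins : insert e ((greedy F l).filter (fun x => r x e)) ∈ F) :
    e ∈ greedy F l := by
  obtain ⟨l₁, l₂, rfl⟩ := List.append_of_mem he
  have hbefore : greedy F l₁ ⊆ (greedy F (l₁ ++ e :: l₂)).filter (fun x => r x e) := by
    intro x hx
    refine Finset.mem_filter.2 ⟨?_, ?_⟩
    · rw [greedy_append_cons]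
      exact subset_foldl_greedyStep F l₂ _ (subset_greedyStep F _ e hx)
    · have hxl₁ : x ∈ l₁ := by simpa using greedy_subset_toFinset F l₁ hx
      exact (List.pairwise_append.1 hsorted).2.2 x hxl₁ e List.mem_cons_self
  have hstep : greedyStep F (greedy F l₁) e = insert e (greedy F l₁) :=
    greedyStep_of_insert_mem F (hdown _ _ (Finset.insert_subset_insert e hbefore) hins)
  rw [greedy_append_cons, hstep]
  exact subset_foldl_greedyStep F l₂ _ (Finset.mem_insert_self e _)

end Greedy

theorem DominantPower.sum_rpow_lt {E : Type*} [Fintype E] {w : E → ℝ} {p : ℝ}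
    (hdom : DominantPower w p) (hpos : ∀ e, 0 < w e) (hinj : Function.Injective w)
    {A B : Finset E} {e : E} (heA : e ∈ A) (heB : e ∉ B)
    (hBA : ∀ s ∈ B, w e < w s → s ∈ A) :
    ∑ s ∈ B, w s ^ p < ∑ s ∈ A, w s ^ p := by
  classical
  have hnonneg : ∀ s, 0 ≤ w s ^ p := fun s => Real.rpow_nonneg (hpos s).le p
  set heavy := B.filter (fun s => w e < w s)
  have hlight : B.filter (fun s => ¬ w e < w s) ⊆ Finset.univ.filter (fun s => w s < w e) := by
    intro s hs
    obtain ⟨hsB, hse⟩ := Finset.mem_filter.1 hs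
    have hne : w s ≠ w e := fun h => heB (hinj h ▸ hsB)
    exact Finset.mem_filter.2 ⟨Finset.mem_univ s, lt_of_le_of_ne (not_lt.1 hse) hne⟩
  have heavy_insert_subset : insert e heavy ⊆ A :=
    Finset.insert_subset heA fun s hs => hBA s (Finset.mem_filter.1 hs).1 (Finset.mem_filter.1 hs).2
  have he_heavy : e ∉ heavy := fun h => heB (Finset.mem_filter.1 h).1
  calc ∑ s ∈ B, w s ^ p
      = ∑ s ∈ heavy, w s ^ p + ∑ s ∈ B.filter (fun s => ¬ w e < w s), w s ^ p :=
        (Finset.sum_filter_add_sum_filter_not B _ _).symm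
    _ < ∑ s ∈ heavy, w s ^ p + w e ^ p := by
        gcongr
        exact (Finset.sum_le_sum_of_subset_of_nonneg hlight fun s _ _ => hnonneg s).trans_lt
          (hdom e)
    _ = ∑ s ∈ insert e heavy, w s ^ p := by rw [Finset.sum_insert he_heavy, add_comm]
    _ ≤ ∑ s ∈ A, w s ^ p :=
        Finset.sum_le_sum_of_subset_of_nonneg heavy_insert_subset fun s _ _ => hnonneg s

open scoped symmDiff in
theorem greedy_maximizes_general {E : Type*} [Fintype E] [DecidableEq E]
    (w : E → ℝ) (hpos : ∀ e, 0 < w e) (hinj : Function.Injective w)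
    (p : ℝ) (hdom : DominantPower w p)
    (F : Set (Finset E))
    (hdown : ∀ A B : Finset E, A ⊆ B → B ∈ F → A ∈ F)
    (hempty : (∅ : Finset E) ∈ F)
    (l : List E) (hmem : ∀ e : E, e ∈ l)
    (hsorted : l.Pairwise (fun a b => w b < w a)) :
    greedy F l ∈ F ∧
      ∀ B ∈ F, (∑ s ∈ B, w s ^ p) ≤ ∑ s ∈ greedy F l, w s ^ p := by
  set A := greedy F l
  refine ⟨greedy_mem F hempty l, fun B hB => ?_⟩
  by_cases hAB : A = B
  · rw [hAB]
  obtain ⟨e, he, hmax⟩ := Finset.exists_max_image (A ∆ B) w (Finset.symmDiff_nonempty.2 hAB)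
  have hagree : ∀ s, w e < w s → (s ∈ A ↔ s ∈ B) := fun s hs => by
    by_contra h
    exact (hmax s (Finset.mem_symmDiff.2 (by tauto))).not_gt hs
  rcases Finset.mem_symmDiff.1 he with ⟨heA, heB⟩ | ⟨heB, heA⟩
  · exact (hdom.sum_rpow_lt hpos hinj heA heB fun s hs h => (hagree s h).2 hs).le
  · refine absurd (mem_greedy_of_insert_mem F hdown hsorted (hmem e) (hdown _ B ?_ hB)) heA
    refine Finset.insert_subset heB fun s hs => ?_
    exact (hagree s (Finset.mem_filter.1 hs).2).1 (Finset.mem_filter.1 hs).1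

/-- Optimality of the (abstract) Semantic Mutex Watershed: for a dominant power
`p > 0` and a downward-closed family `F` with `∅ ∈ F`, the greedy algorithm,
processing the elements of `E` in strictly descending order of weight,
returns a set in `F` maximizing `∑_{e ∈ A} w e ^ p` over all `A ∈ F`. -/
theorem greedy_maximizes {E : Type*} [Fintype E] [DecidableEq E]
    (w : E → ℝ) (hpos : ∀ e, 0 < w e) (hinj : Function.Injective w)
    (p : ℝ) (hp : 0 < p) (hdom : DominantPower w p)
    (F : Set (Finset E))
    (hdown : ∀ A B : Finset E, A ⊆ B → B ∈ F → A ∈ F)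
    (hempty : (∅ : Finset E) ∈ F)
    (l : List E) (hmem : ∀ e : E, e ∈ l) (hnodup : l.Nodup)
    (hsorted : l.Pairwise (fun a b => w b < w a)) :
    greedy F l ∈ F ∧
      ∀ B ∈ F, (∑ s ∈ B, w s ^ p) ≤ ∑ s ∈ greedy F l, w s ^ p :=
  greedy_maximizes_general w hpos hinj p hdom F hdown hempty l hmem hsorted
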